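/- arXiv:2008.04809 — 5 statements merged into one kernel-verified Lean document; each statement's English description precedes it below -/
import Mathlib

section
/- (Theorem 2.) Let t₀ ∈ ℝ. Let ξ : ℝ → ℝ² and z : ℝ → ℝ be differentiable on [t₀, ∞), let Ω : ℝ → ℝ², g : ℝ → ℝ, Δ : ℝ → ℝ be functions, let H be a real 2×2 matrix, and let constants satisfy: k₁ > 0 with ⟨x, H·x⟩ ≥ k₁·‖x‖² for all x ∈ ℝ²; Γ > 0; σ₁ > 0 and S ≥ σ₁; L_g ≥ 0; D ≥ 0; and the gain condition K_CL > L_g/(σ₁·Γ). Suppose for all t ≥ t₀: ξ'(t) = −H·ξ(t) + z(t)·Ω(t); z'(t) = −Γ·⟨Ω(t), ξ(t)⟩ + g(t) − K_CL·Γ·(S·z(t) + Δ(t)); |g(t)| ≤ L_g·|z(t)|; and |Δ(t)| ≤ D. Define c₃ = min{1/2, 1/(2Γ)}, c₄ = max{1/2, 1/(2Γ)}, k₃ = K_CL·σ₁ − L_g/Γ, α₁ = min{k₁, k₃/2}, β₂ = K_CL·D/√(2·k₃·α₁), and e(t) = √(‖ξ(t)‖² + z(t)²). Then for all t ≥ t₀,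 e(t) ≤ √( (c₄/c₃)·( e(t₀)²·exp(−(α₁/c₄)·(t − t₀)) + β₂²·(1 − exp(−(α₁/c₄)·(t − t₀))) ) ); in particular the error is uniformly ultimately bounded with limsup_{t → ∞} e(t) ≤ √(c₄/c₃)·β₂. -/
/-!
The Lyapunov function `V = ½‖ξ‖² + z²/(2Γ)` lies between `c₃ e²` and `c₄ e²`. Along the error
dynamics the coupling terms `z ⟪Ω, ξ⟫` cancel, the gain condition makes the coefficient `k₃` of
`z²` positive, and Young's inequality absorbs the concurrent-learning disturbance, so that
`V' ≤ -(α₁ / c₄) (V - c₄ β₂²)`. Grönwall's inequality bounds `V`, hence `e²`, by an exponentially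
decaying term plus `c₄ β₂²`; letting `t → ∞` gives the ultimate bound.
-/

open scoped InnerProductSpace Topology
open Set Filter Real

theorem le_exp_decay_of_hasDerivAt_le {V V' : ℝ → ℝ} {t₀ l B : ℝ} (hl : l ≠ 0)
    (hV : ∀ t ∈ Ici t₀, HasDerivAt V (V' t) t)
    (hdecay : ∀ t ∈ Ici t₀, V' t ≤ -l * (V t - B)) (t : ℝ) (ht : t ∈ Ici t₀) :
    V t ≤ V t₀ * exp (-l * (t - t₀)) + B * (1 - exp (-l * (t - t₀))) := by
  have hVt : ∀ s ∈ Icc t₀ t, HasDerivAt V (V' s) s := fun s hs => hV s hs.1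
  have := le_gronwallBound_of_liminf_deriv_right_le (f := V) (K := -l) (ε := l * B)
    (fun s hs => (hVt s hs).continuousAt.continuousWithinAt)
    (fun s hs _ hr => (hVt s (Ico_subset_Icc_self hs)).hasDerivWithinAt.liminf_right_slope_le hr)
    le_rfl (fun s hs => by linarith [hdecay s hs.1]) t ⟨ht, le_rfl⟩
  rw [gronwallBound_of_K_ne_0 (neg_ne_zero.2 hl)] at this
  convert this using 1
  field_simp
  ring

theorem mul_sub_div_pos_of_div_mul_lt {a b c K : ℝ} (hb : 0 < b) (hc : 0 < c)
    (h : a / (b * c) < K) : 0 < K * b - a / c := by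
  rw [div_lt_iff₀ (mul_pos hb hc)] at h
  rw [sub_pos, div_lt_iff₀ hc]
  linarith

theorem min_mul_add_le_mul_add_mul {p q a b : ℝ} (ha : 0 ≤ a) (hb : 0 ≤ b) :
    min p q * (a + b) ≤ p * a + q * b := by
  nlinarith [min_le_left p q, min_le_right p q]

theorem mul_add_mul_le_max_mul_add {p q a b : ℝ} (ha : 0 ≤ a) (hb : 0 ≤ b) :
    p * a + q * b ≤ max p q * (a + b) := by
  nlinarith [le_max_left p q, le_max_right p q]

theorem mul_le_half_mul_sq_add {k : ℝ} (hk : 0 < k) (a x : ℝ) :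
    a * x ≤ k / 2 * x ^ 2 + a ^ 2 / (2 * k) := by
  rw [← sub_nonneg]
  have : k / 2 * x ^ 2 + a ^ 2 / (2 * k) - a * x = (k * x - a) ^ 2 / (2 * k) := by
    field_simp; ring
  rw [this]; positivity

theorem tendsto_exp_decay_bound {l : ℝ} (hl : 0 < l) (t₀ a b : ℝ) :
    Tendsto (fun t => a * exp (-l * (t - t₀)) + b * (1 - exp (-l * (t - t₀)))) atTop (𝓝 b) := by
  have hexp : Tendsto (fun t => exp (-l * (t - t₀))) atTop (𝓝 0) := by
    refine tendsto_exp_atBot.comp ?_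
    simp_rw [neg_mul]
    exact tendsto_neg_atTop_atBot.comp
      ((tendsto_atTop_add_const_right _ (-t₀) tendsto_id).const_mul_atTop hl)
  simpa using (hexp.const_mul a).add (((tendsto_const_nhds (x := (1 : ℝ))).sub hexp).const_mul b)

theorem limsup_le_of_le_of_tendsto {e b : ℝ → ℝ} {t₀ L : ℝ} (he : ∀ t, 0 ≤ e t)
    (heb : ∀ t ∈ Ici t₀, e t ≤ b t) (hb : Tendsto b atTop (𝓝 L)) :
    limsup e atTop ≤ L := by
  rw [← hb.limsup_eq]
  exact limsup_le_limsup (eventually_ge_atTop t₀ |>.mono heb)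
    (isCoboundedUnder_le_of_le atTop he) hb.isBoundedUnder_le

theorem neg_mul_add_le_neg_div_mul_sub {α c V N ε : ℝ} (hα : 0 < α) (hc : 0 < c)
    (hV : V ≤ c * N) : -α * N + ε ≤ -(α / c) * (V - c * (ε / α)) := by
  have hαV : α / c * V ≤ α * N := by
    rw [div_mul_eq_mul_div, div_le_iff₀ hc]; nlinarith
  have hε : α / c * (c * (ε / α)) = ε := by field_simp
  linarith [show -(α / c) * (V - c * (ε / α)) = -(α / c * V) + α / c * (c * (ε / α)) by ring]

theorem le_sqrt_of_lyapunov_sandwich {e₀ e V₀ V c₃ c₄ F B : ℝ} (hc₃ : 0 < c₃)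
    (hF : 0 ≤ F) (hlow : c₃ * e ^ 2 ≤ V) (hup : V₀ ≤ c₄ * e₀ ^ 2)
    (hV : V ≤ V₀ * F + c₄ * B * (1 - F)) :
    e ≤ sqrt (c₄ / c₃ * (e₀ ^ 2 * F + B * (1 - F))) := by
  apply Real.le_sqrt_of_sq_le
  rw [div_mul_eq_mul_div, le_div_iff₀ hc₃]
  nlinarith [mul_le_mul_of_nonneg_right hup hF]

section Observer

variable {E : Type*} [NormedAddCommGroup E] [InnerProductSpace ℝ E]

theorem hasDerivAt_half_norm_sq_add_sq_div {ξ : ℝ → E} {z : ℝ → ℝ} {ξ' : E} {z' Γ t : ℝ}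
    (hξ : HasDerivAt ξ ξ' t) (hz : HasDerivAt z z' t) :
    HasDerivAt (fun s => 1 / 2 * ‖ξ s‖ ^ 2 + 1 / (2 * Γ) * z s ^ 2)
      (⟪ξ t, ξ'⟫_ℝ + z t * z' / Γ) t := by
  refine ((hξ.norm_sq.const_mul (1 / 2)).add ((hz.pow 2).const_mul (1 / (2 * Γ)))).congr_deriv ?_
  norm_num
  ring

theorem observer_lyapunov_deriv_le {x Ω Ax : E} {w g δ Γ σ₁ S Lg D K k₁ k₃ α : ℝ}
    (hΓ : 0 < Γ) (hK : 0 ≤ K) (hS : σ₁ ≤ S) (hk₃ : 0 < k₃) (hk₃le : k₃ ≤ K * σ₁ - Lg / Γ)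
    (hαk₁ : α ≤ k₁) (hαk₃ : α ≤ k₃ / 2)
    (hA : k₁ * ‖x‖ ^ 2 ≤ ⟪x, Ax⟫_ℝ) (hg : |g| ≤ Lg * |w|) (hδ : |δ| ≤ D) :
    ⟪x, -Ax + w • Ω⟫_ℝ + w * (-(Γ * ⟪Ω, x⟫_ℝ) + g - K * Γ * (S * w + δ)) / Γ
      ≤ -α * (‖x‖ ^ 2 + w ^ 2) + (K * D) ^ 2 / (2 * k₃) := by
  have hcancel : ⟪x, -Ax + w • Ω⟫_ℝ + w * (-(Γ * ⟪Ω, x⟫_ℝ) + g - K * Γ * (S * w + δ)) / Γ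
      = -⟪x, Ax⟫_ℝ + w * g / Γ - K * S * w ^ 2 - K * (w * δ) := by
    rw [inner_add_right, inner_neg_right, real_inner_smul_right, real_inner_comm Ω x]
    field_simp
    ring
  have hwg : w * g / Γ ≤ Lg / Γ * w ^ 2 := by
    rw [div_mul_eq_mul_div, div_le_div_iff_of_pos_right hΓ, ← sq_abs w]
    calc w * g ≤ |w| * |g| := (le_abs_self _).trans (abs_mul w g).le
      _ ≤ |w| * (Lg * |w|) := mul_le_mul_of_nonneg_left hg (abs_nonneg w)
      _ = Lg * |w| ^ 2 := by ring
  have hwδ : -(w * δ) ≤ D * |w| :=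
    calc -(w * δ) ≤ |w| * |δ| := (neg_le_abs _).trans (abs_mul w δ).le
      _ ≤ D * |w| := by rw [mul_comm]; exact mul_le_mul_of_nonneg_right hδ (abs_nonneg w)
  have hyoung := mul_le_half_mul_sq_add hk₃ (K * D) |w|
  rw [sq_abs] at hyoung
  have hS' : K * σ₁ * w ^ 2 ≤ K * S * w ^ 2 := by gcongr
  nlinarith [mul_le_mul_of_nonneg_left hwδ hK, mul_le_mul_of_nonneg_right hαk₁ (sq_nonneg ‖x‖),
    mul_le_mul_of_nonneg_right hαk₃ (sq_nonneg w), mul_le_mul_of_nonneg_right hk₃le (sq_nonneg w)]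

end Observer

/-- Theorem 2: UUB of the full-order concurrent-learning observer error when the
history stack is complete, without persistence of excitation, under the gain condition
`K_CL > L_g/(σ₁·Γ)`. -/
theorem full_order_complete_stack_UUB
    (t₀ : ℝ) (ξ : ℝ → EuclideanSpace ℝ (Fin 2)) (z : ℝ → ℝ)
    (Ω : ℝ → EuclideanSpace ℝ (Fin 2)) (g Δ : ℝ → ℝ)
    (H : Matrix (Fin 2) (Fin 2) ℝ)
    (k₁ Γ σ₁ S Lg D KCL : ℝ)
    (hk₁ : 0 < k₁)
    (hH : ∀ x : EuclideanSpace ℝ (Fin 2), k₁ * ‖x‖ ^ 2 ≤ ⟪x, Matrix.toEuclideanLin H x⟫_ℝ)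
    (hΓ : 0 < Γ) (hσ₁ : 0 < σ₁) (hS : σ₁ ≤ S) (hLg : 0 ≤ Lg) (hD : 0 ≤ D)
    (hgain : Lg / (σ₁ * Γ) < KCL)
    (hξ : ∀ t ∈ Set.Ici t₀, HasDerivAt ξ
      (-(Matrix.toEuclideanLin H (ξ t)) + z t • Ω t) t)
    (hz : ∀ t ∈ Set.Ici t₀, HasDerivAt z
      (-(Γ * ⟪Ω t, ξ t⟫_ℝ) + g t - KCL * Γ * (S * z t + Δ t)) t)
    (hg : ∀ t ∈ Set.Ici t₀, |g t| ≤ Lg * |z t|)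
    (hΔ : ∀ t ∈ Set.Ici t₀, |Δ t| ≤ D)
    (c₃ c₄ k₃ α₁ β₂ : ℝ)
    (hc₃ : c₃ = min (1 / 2) (1 / (2 * Γ)))
    (hc₄ : c₄ = max (1 / 2) (1 / (2 * Γ)))
    (hk₃ : k₃ = KCL * σ₁ - Lg / Γ)
    (hα₁ : α₁ = min k₁ (k₃ / 2))
    (hβ₂ : β₂ = KCL * D / Real.sqrt (2 * k₃ * α₁))
    (e : ℝ → ℝ)
    (he : ∀ t, e t = Real.sqrt (‖ξ t‖ ^ 2 + z t ^ 2)) :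
    (∀ t ∈ Set.Ici t₀,
      e t ≤ Real.sqrt ((c₄ / c₃) *
        (e t₀ ^ 2 * Real.exp (-(α₁ / c₄) * (t - t₀))
          + β₂ ^ 2 * (1 - Real.exp (-(α₁ / c₄) * (t - t₀)))))) ∧
    Filter.limsup e Filter.atTop ≤ Real.sqrt (c₄ / c₃) * β₂ := by
  have hKCL : 0 ≤ KCL := (div_nonneg hLg (mul_pos hσ₁ hΓ).le).trans hgain.le
  have hk₃pos : 0 < k₃ := hk₃ ▸ mul_sub_div_pos_of_div_mul_lt hσ₁ hΓ hgain
  have hα₁pos : 0 < α₁ := hα₁ ▸ lt_min hk₁ (half_pos hk₃pos)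
  have hc₃pos : 0 < c₃ := hc₃ ▸ lt_min one_half_pos (by positivity)
  have hc₄pos : 0 < c₄ := hc₄ ▸ lt_max_of_lt_left one_half_pos
  have hα₁c₄ : 0 < α₁ / c₄ := div_pos hα₁pos hc₄pos
  have hβ₂sq : β₂ ^ 2 = (KCL * D) ^ 2 / (2 * k₃) / α₁ := by
    rw [hβ₂, div_pow, sq_sqrt (by positivity), div_div]
  have he_sq : ∀ t, e t ^ 2 = ‖ξ t‖ ^ 2 + z t ^ 2 := fun t => he t ▸ sq_sqrt (by positivity)
  set V := fun t => 1 / 2 * ‖ξ t‖ ^ 2 + 1 / (2 * Γ) * z t ^ 2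
  have hV_le : ∀ t, V t ≤ c₄ * e t ^ 2 := fun t =>
    hc₄ ▸ he_sq t ▸ mul_add_mul_le_max_mul_add (by positivity) (sq_nonneg _)
  have hV_ge : ∀ t, c₃ * e t ^ 2 ≤ V t := fun t =>
    hc₃ ▸ he_sq t ▸ min_mul_add_le_mul_add_mul (by positivity) (sq_nonneg _)
  have hV : ∀ t ∈ Ici t₀, HasDerivAt V _ t := fun t ht =>
    hasDerivAt_half_norm_sq_add_sq_div (hξ t ht) (hz t ht)
  have hbound : ∀ t ∈ Ici t₀, e t ≤ sqrt (c₄ / c₃ *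
      (e t₀ ^ 2 * exp (-(α₁ / c₄) * (t - t₀)) + β₂ ^ 2 * (1 - exp (-(α₁ / c₄) * (t - t₀))))) := by
    refine fun t ht => le_sqrt_of_lyapunov_sandwich hc₃pos (exp_pos _).le (hV_ge t) (hV_le t₀) ?_
    refine le_exp_decay_of_hasDerivAt_le hα₁c₄.ne' hV (fun s hs => ?_) t ht
    rw [hβ₂sq]
    refine (he_sq s ▸ observer_lyapunov_deriv_le hΓ hKCL hS hk₃pos hk₃.le
      (hα₁ ▸ min_le_left _ _) (hα₁ ▸ min_le_right _ _) (hH _) (hg s hs) (hΔ s hs)).trans ?_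
    exact neg_mul_add_le_neg_div_mul_sub hα₁pos hc₄pos (hV_le s)
  refine ⟨hbound, limsup_le_of_le_of_tendsto (fun t => he t ▸ sqrt_nonneg _) hbound ?_⟩
  have := ((tendsto_exp_decay_bound hα₁c₄ t₀ (e t₀ ^ 2) (β₂ ^ 2)).const_mul (c₄ / c₃)).sqrt
  rwa [sqrt_mul (by positivity), sqrt_sq (by rw [hβ₂]; positivity)] at this
end

section
/- Let t₀ ∈ ℝ. Let ξ : ℝ → ℝ² and z : ℝ → ℝ be differentiable on [t₀, ∞), let Ω : ℝ → ℝ², g, Δ : ℝ → ℝ, let H be a real 2×2 matrix with ⟨x, H·x⟩ ≥ k₁·‖x‖² for all x ∈ ℝ² (k₁ > 0), and let Γ > 0, σ₁ > 0, S ≥ σ₁, L_g ≥ 0, D ≥ 0, K_CL > L_g/(σ₁·Γ). Suppose for all t ≥ t₀: ξ'(t) = −H·ξ(t) + z(t)·Ω(t); z'(t) = −Γ·⟨Ω(t), ξ(t)⟩ + g(t) − K_CL·Γ·(S·z(t) + Δ(t)); |g(t)| ≤ L_g·|z(t)|; |Δ(t)| ≤ D. Then the function V(t) = (1/2)·‖ξ(t)‖²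 + (1/(2Γ))·z(t)² satisfies, for all t ≥ t₀, V'(t) ≤ −k₁·‖ξ(t)‖² − (k₃/2)·z(t)² + (K_CL²·D²)/(2·k₃) ≤ −(α₁/c₄)·V(t) + (K_CL²·D²)/(2·k₃), where k₃ = K_CL·σ₁ − L_g/Γ, α₁ = min{k₁, k₃/2} and c₄ = max{1/2, 1/(2Γ)}. -/
open scoped InnerProductSpace

/-!
Differentiating `V = ½‖ξ‖² + z²/(2Γ)` along the error dynamics, the two terms `± z ⟪Ω, ξ⟫` cancel,
leaving `-⟪ξ, Hξ⟫ + z (g - K_CL Γ (S z + Δ)) / Γ`.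
The first term is at most `-k₁‖ξ‖²`; in the second, the mismatch `g` costs at most `(L_g/Γ) z²`,
the complete stack contributes `-K_CL S z² ≤ -K_CL σ₁ z²`, and Young's inequality splits the
disturbance term `K_CL |z| D` into `(k₃/2) z² + K_CL² D² / (2 k₃)`. Comparing coefficients with
`V` gives the second inequality.
-/

section LyapunovCalculus

variable {E : Type*} [NormedAddCommGroup E] [InnerProductSpace ℝ E]

theorem HasDerivAt.half_norm_sq_add_sq_div {x : ℝ → E} {y : ℝ → ℝ} {x' : E} {y' Γ t : ℝ}
    (hx : HasDerivAt x x' t) (hy : HasDerivAt y y' t) :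
    HasDerivAt (fun s ↦ 1 / 2 * ‖x s‖ ^ 2 + 1 / (2 * Γ) * y s ^ 2)
      (⟪x t, x'⟫_ℝ + y t * y' / Γ) t := by
  refine ((hx.norm_sq.const_mul (1 / 2)).add ((hy.pow 2).const_mul (1 / (2 * Γ)))).congr_deriv ?_
  field_simp
  ring

theorem inner_neg_add_smul_add_mul_div_eq (A : E →ₗ[ℝ] E) (x w : E) {ζ Γ : ℝ} (r : ℝ)
    (hΓ : Γ ≠ 0) :
    ⟪x, -A x + ζ • w⟫_ℝ + ζ * (-(Γ * ⟪w, x⟫_ℝ) + r) / Γ = -⟪x, A x⟫_ℝ + ζ * r / Γ := by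
  rw [inner_add_right, inner_neg_right, real_inner_smul_right, real_inner_comm w x]
  field_simp
  ring

end LyapunovCalculus

theorem mul_sub_mul_add_div_le {ζ g Δ Γ K S L D k : ℝ} (hΓ : 0 < Γ) (hk : 0 < k)
    (hgain : k ≤ K * S - L / Γ) (hg : |g| ≤ L * |ζ|) (hΔ : |Δ| ≤ D) :
    ζ * (g - K * Γ * (S * ζ + Δ)) / Γ ≤ -(k / 2) * ζ ^ 2 + K ^ 2 * D ^ 2 / (2 * k) := by
  have hexpand : ζ * (g - K * Γ * (S * ζ + Δ)) / Γ
      = ζ * g / Γ - K * S * ζ ^ 2 - K * ζ * Δ := by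
    field_simp
    ring
  have hmismatch : ζ * g ≤ L * ζ ^ 2 :=
    calc ζ * g ≤ |ζ| * |g| := (le_abs_self _).trans (abs_mul _ _).le
      _ ≤ |ζ| * (L * |ζ|) := mul_le_mul_of_nonneg_left hg (abs_nonneg ζ)
      _ = L * ζ ^ 2 := by rw [← sq_abs ζ]; ring
  have hmismatch' : ζ * g / Γ ≤ L / Γ * ζ ^ 2 := by
    rw [div_mul_eq_mul_div]; gcongr
  have hdisturbance : -(K * ζ * Δ) ≤ |ζ| * (|K| * D) :=
    calc -(K * ζ * Δ) ≤ |K * ζ| * |Δ| := (neg_le_abs _).trans (abs_mul _ _).le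
      _ ≤ |K * ζ| * D := mul_le_mul_of_nonneg_left hΔ (abs_nonneg _)
      _ = |ζ| * (|K| * D) := by rw [abs_mul]; ring
  have hyoung := two_mul_le_add_mul_sq (a := |ζ|) (b := |K| * D) hk
  rw [sq_abs, mul_pow, sq_abs] at hyoung
  have hstack : (L / Γ - K * S) * ζ ^ 2 ≤ -k * ζ ^ 2 :=
    mul_le_mul_of_nonneg_right (by linarith) (sq_nonneg ζ)
  have hsplit : K ^ 2 * D ^ 2 / (2 * k) = k⁻¹ * (K ^ 2 * D ^ 2) / 2 := by
    field_simp
  rw [hexpand, hsplit]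
  linarith

theorem min_div_max_mul_add_le {k l p q a b : ℝ} (hk : 0 ≤ k) (hl : 0 ≤ l) (hp : 0 < p)
    (ha : 0 ≤ a) (hb : 0 ≤ b) :
    min k l / max p q * (p * a + q * b) ≤ k * a + l * b := by
  have hmax : 0 < max p q := hp.trans_le (le_max_left p q)
  have hmin : 0 ≤ min k l := le_min hk hl
  have hcoeff {c w : ℝ} (hc : min k l ≤ c) (hw : w ≤ max p q) : min k l / max p q * w ≤ c := by
    rw [div_mul_eq_mul_div, div_le_iff₀ hmax]
    calc min k l * w ≤ min k l * max p q := mul_le_mul_of_nonneg_left hw hmin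
      _ ≤ c * max p q := mul_le_mul_of_nonneg_right hc hmax.le
  have hpa := mul_le_mul_of_nonneg_right (hcoeff (min_le_left k l) (le_max_left p q)) ha
  have hqb := mul_le_mul_of_nonneg_right (hcoeff (min_le_right k l) (le_max_right p q)) hb
  linarith

theorem full_order_complete_stack_lyapunov_inequality_general
    (t₀ : ℝ) (ξ : ℝ → EuclideanSpace ℝ (Fin 2)) (z : ℝ → ℝ)
    (Ω : ℝ → EuclideanSpace ℝ (Fin 2)) (g Δ : ℝ → ℝ)
    (H : Matrix (Fin 2) (Fin 2) ℝ)
    (k₁ Γ σ₁ S Lg D KCL : ℝ)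
    (hk₁ : 0 < k₁)
    (hH : ∀ x : EuclideanSpace ℝ (Fin 2), k₁ * ‖x‖ ^ 2 ≤ ⟪x, Matrix.toEuclideanLin H x⟫_ℝ)
    (hΓ : 0 < Γ) (hσ₁ : 0 < σ₁) (hS : σ₁ ≤ S) (hLg : 0 ≤ Lg)
    (hgain : Lg / (σ₁ * Γ) < KCL)
    (hξ : ∀ t ∈ Set.Ici t₀, HasDerivAt ξ
      (-(Matrix.toEuclideanLin H (ξ t)) + z t • Ω t) t)
    (hz : ∀ t ∈ Set.Ici t₀, HasDerivAt z
      (-(Γ * ⟪Ω t, ξ t⟫_ℝ) + g t - KCL * Γ * (S * z t + Δ t)) t)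
    (hg : ∀ t ∈ Set.Ici t₀, |g t| ≤ Lg * |z t|)
    (hΔ : ∀ t ∈ Set.Ici t₀, |Δ t| ≤ D)
    (k₃ α₁ c₄ : ℝ)
    (hk₃ : k₃ = KCL * σ₁ - Lg / Γ)
    (hα₁ : α₁ = min k₁ (k₃ / 2))
    (hc₄ : c₄ = max (1 / 2) (1 / (2 * Γ)))
    (V : ℝ → ℝ)
    (hV : ∀ t, V t = (1 / 2) * ‖ξ t‖ ^ 2 + (1 / (2 * Γ)) * z t ^ 2) :
    ∀ t ∈ Set.Ici t₀,
      deriv V t ≤ -k₁ * ‖ξ t‖ ^ 2 - (k₃ / 2) * z t ^ 2 + KCL ^ 2 * D ^ 2 / (2 * k₃) ∧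
      -k₁ * ‖ξ t‖ ^ 2 - (k₃ / 2) * z t ^ 2 + KCL ^ 2 * D ^ 2 / (2 * k₃)
        ≤ -(α₁ / c₄) * V t + KCL ^ 2 * D ^ 2 / (2 * k₃) := by
  intro t ht
  have hKCL : 0 ≤ KCL := (div_nonneg hLg (by positivity)).trans hgain.le
  rw [mul_comm, ← div_div, div_lt_iff₀ hσ₁] at hgain
  have hk₃pos : 0 < k₃ := hk₃ ▸ sub_pos.2 hgain
  have hk₃S : k₃ ≤ KCL * S - Lg / Γ := by
    rw [hk₃]; linarith [mul_le_mul_of_nonneg_left hS hKCL]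
  have hVderiv := funext hV ▸ (hξ t ht).half_norm_sq_add_sq_div (Γ := Γ) (hz t ht)
  refine ⟨?_, ?_⟩
  · rw [hVderiv.deriv, add_sub_assoc,
      inner_neg_add_smul_add_mul_div_eq _ _ _ _ hΓ.ne']
    have hz_rate := mul_sub_mul_add_div_le hΓ hk₃pos hk₃S (hg t ht) (hΔ t ht)
    linarith [hH (ξ t)]
  · have hcompare := min_div_max_mul_add_le hk₁.le (half_pos hk₃pos).le one_half_pos
      (q := 1 / (2 * Γ)) (sq_nonneg ‖ξ t‖) (sq_nonneg (z t))
    rw [hV t, hα₁, hc₄]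
    linarith

/-- Lyapunov derivative inequality for the full-order concurrent-learning observer error
dynamics when the history stack is complete:
`V'(t) ≤ −k₁‖ξ‖² − (k₃/2)z² + K_CL²D²/(2k₃) ≤ −(α₁/c₄)V + K_CL²D²/(2k₃)`. -/
theorem full_order_complete_stack_lyapunov_inequality
    (t₀ : ℝ) (ξ : ℝ → EuclideanSpace ℝ (Fin 2)) (z : ℝ → ℝ)
    (Ω : ℝ → EuclideanSpace ℝ (Fin 2)) (g Δ : ℝ → ℝ)
    (H : Matrix (Fin 2) (Fin 2) ℝ)
    (k₁ Γ σ₁ S Lg D KCL : ℝ)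
    (hk₁ : 0 < k₁)
    (hH : ∀ x : EuclideanSpace ℝ (Fin 2), k₁ * ‖x‖ ^ 2 ≤ ⟪x, Matrix.toEuclideanLin H x⟫_ℝ)
    (hΓ : 0 < Γ) (hσ₁ : 0 < σ₁) (hS : σ₁ ≤ S) (hLg : 0 ≤ Lg) (hD : 0 ≤ D)
    (hgain : Lg / (σ₁ * Γ) < KCL)
    (hξ : ∀ t ∈ Set.Ici t₀, HasDerivAt ξ
      (-(Matrix.toEuclideanLin H (ξ t)) + z t • Ω t) t)
    (hz : ∀ t ∈ Set.Ici t₀, HasDerivAt z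
      (-(Γ * ⟪Ω t, ξ t⟫_ℝ) + g t - KCL * Γ * (S * z t + Δ t)) t)
    (hg : ∀ t ∈ Set.Ici t₀, |g t| ≤ Lg * |z t|)
    (hΔ : ∀ t ∈ Set.Ici t₀, |Δ t| ≤ D)
    (k₃ α₁ c₄ : ℝ)
    (hk₃ : k₃ = KCL * σ₁ - Lg / Γ)
    (hα₁ : α₁ = min k₁ (k₃ / 2))
    (hc₄ : c₄ = max (1 / 2) (1 / (2 * Γ)))
    (V : ℝ → ℝ)
    (hV : ∀ t, V t = (1 / 2) * ‖ξ t‖ ^ 2 + (1 / (2 * Γ)) * z t ^ 2) :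
    ∀ t ∈ Set.Ici t₀,
      deriv V t ≤ -k₁ * ‖ξ t‖ ^ 2 - (k₃ / 2) * z t ^ 2 + KCL ^ 2 * D ^ 2 / (2 * k₃) ∧
      -k₁ * ‖ξ t‖ ^ 2 - (k₃ / 2) * z t ^ 2 + KCL ^ 2 * D ^ 2 / (2 * k₃)
        ≤ -(α₁ / c₄) * V t + KCL ^ 2 * D ^ 2 / (2 * k₃) :=
  full_order_complete_stack_lyapunov_inequality_general t₀ ξ z Ω g Δ H k₁ Γ σ₁ S Lg D KCL hk₁ hH hΓ
    hσ₁ hS hLg hgain hξ hz hg hΔ k₃ α₁ c₄ hk₃ hα₁ hc₄ V hV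
end

section
/- Let s = (x, y) : ℝ → ℝ² and v = (v_X, v_Y, v_Z) : ℝ → ℝ³ be differentiable functions of time. Define θ(t) = (x(t), y(t), −(x(t)² + y(t)²)/2) ∈ ℝ³ and Ω(t) = (x(t)·v_Z(t) − v_X(t), y(t)·v_Z(t) − v_Y(t)) ∈ ℝ². Then for all t, the derivative of the scalar function t ↦ ⟨θ(t), v(t)⟩ equals −⟨Ω(t), s'(t)⟩ + ⟨θ(t), v'(t)⟩. -/
/-! θ is quadratic, with differential `dθ_s(h) = (h₀, h₁, −⟨s, h⟩)`, and pairing this with `v`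
gives `h₀ v_X + h₁ v_Y − (x h₀ + y h₁) v_Z = −⟨Ω(s, v), h⟩`. The product rule for `⟨θ(s), v⟩`
then yields the identity. -/

open scoped InnerProductSpace

noncomputable section

abbrev E2 := EuclideanSpace ℝ (Fin 2)
abbrev E3 := EuclideanSpace ℝ (Fin 3)

/-- `θ(t) = (x(t), y(t), −(x(t)² + y(t)²)/2)` for `s = (x, y)`. -/
def theta (s : E2) : E3 := WithLp.toLp 2 ![s 0, s 1, -(s 0 ^ 2 + s 1 ^ 2) / 2]

/-- The regressor `Ω(s, v) = (x·v_Z − v_X, y·v_Z − v_Y)`. -/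
def Omg (s : E2) (v : E3) : E2 := WithLp.toLp 2 ![s 0 * v 2 - v 0, s 1 * v 2 - v 1]

def thetaDeriv (s h : E2) : E3 := WithLp.toLp 2 ![h 0, h 1, -(s 0 * h 0 + s 1 * h 1)]

theorem HasDerivAt.euclidean_apply {ι : Type*} [Fintype ι] {f : ℝ → EuclideanSpace ℝ ι}
    {f' : EuclideanSpace ℝ ι} {t : ℝ} (hf : HasDerivAt f f' t) (i : ι) :
    HasDerivAt (fun τ => f τ i) (f' i) t :=
  (EuclideanSpace.proj (𝕜 := ℝ) i).hasFDerivAt.comp_hasDerivAt t hf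

theorem HasDerivAt.theta {s : ℝ → E2} {s' : E2} {t : ℝ} (hs : HasDerivAt s s' t) :
    HasDerivAt (fun τ => theta (s τ)) (thetaDeriv (s t) s') t := by
  have hx := hs.euclidean_apply 0
  have hy := hs.euclidean_apply 1
  have hvec : HasDerivAt (fun τ => ![s τ 0, s τ 1, -(s τ 0 ^ 2 + s τ 1 ^ 2) / 2])
      ![s' 0, s' 1, -(s t 0 * s' 0 + s t 1 * s' 1)] t := by
    refine hasDerivAt_pi.2 fun i => ?_
    fin_cases i
    · exact hx
    · exact hy
    · refine (((hx.pow 2).add (hy.pow 2)).neg.div_const 2).congr_deriv ?_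
      simp only [Fin.reduceFinMk, Matrix.cons_val, Nat.cast_ofNat, Nat.add_one_sub_one, pow_one]
      ring
  exact (PiLp.hasFDerivAt_toLp (𝕜 := ℝ) 2 _).comp_hasDerivAt t hvec

theorem inner_thetaDeriv (s h : E2) (v : E3) : ⟪thetaDeriv s h, v⟫_ℝ = -⟪Omg s v, h⟫_ℝ := by
  simp only [thetaDeriv, Omg, PiLp.inner_apply, RCLike.inner_apply, Real.ringHom_apply,
    Fin.sum_univ_succ, Fin.sum_univ_zero, Matrix.cons_val_zero, Matrix.cons_val_succ,
    Fin.succ_zero_eq_one, Fin.succ_one_eq_two]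
  ring

/-- The output-injection identity underlying the reduced-order depth observer:
`d/dt ⟨θ(t), v(t)⟩ = −⟨Ω(t), s'(t)⟩ + ⟨θ(t), v'(t)⟩`. -/
theorem theta_inner_v_deriv
    (s : ℝ → E2) (v : ℝ → E3) (s' : ℝ → E2) (v' : ℝ → E3)
    (hs : ∀ t, HasDerivAt s (s' t) t) (hv : ∀ t, HasDerivAt v (v' t) t) :
    ∀ t, HasDerivAt (fun τ => ⟪theta (s τ), v τ⟫_ℝ)
      (-⟪Omg (s t) (v t), s' t⟫_ℝ + ⟪theta (s t), v' t⟫_ℝ) t := fun t =>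
  ((hs t).theta.inner ℝ (hv t)).congr_deriv <| by rw [inner_thetaDeriv, add_comm]
end
end

section
/- (Theorem 3.) Let t₀ ∈ ℝ, let z : ℝ → ℝ be continuous on [t₀, ∞), and let constants c₅, c₆, k₄, γ₂, δ satisfy 0 < c₅ ≤ c₆, k₄ > 0, γ₂ > 0, δ ≥ 0, where δ = K̄·σ̄·(M−1)·χ̄ for nonnegative constants K̄, σ̄, χ̄ and M ∈ ℕ with M ≥ 1. Suppose there is a function W : ℝ → ℝ (the Lyapunov function evaluated along the depth error trajectory) that is differentiable on [t₀, ∞) and satisfies, for all t ≥ t₀: c₅·z(t)² ≤ W(t) ≤ c₆·z(t)² and W'(t) ≤ −k₄·z(t)² + γ₂·|z(t)|·δ. Then for all t ≥ t₀, |z(t)| ≤ √( (c₆/c₅)·( z(t₀)²·exp(−(k₄/(2c₆))·(t − t₀)) + β₃²·(1 − exp(−(k₄/(2c₆))·(t − t₀))) ) ), where β₃ = γ₂·δ/k₄. In particular the error is uniformly ultimately bounded: limsup_{t → ∞} |z(t)| ≤ √(c₆/c₅)·β₃ = √(c₆/c₅)·γ₂·K̄·σ̄·(M−1)·χ̄/k₄.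 -/
/-!
Young's inequality turns the dissipation bound `W' ≤ -k₄ z² + γ₂ |z| δ` into
`W' ≤ -k₄ z² / 2 + (γ₂ δ)² / (2 k₄)`, and the upper sandwich bound `W ≤ c₆ z²` makes this the
linear differential inequality `W' ≤ -l W + l c₆ β²` with `l = k₄ / (2 c₆)` and `β = γ₂ δ / k₄`.
Grönwall's inequality then bounds `W` by the exponential interpolation between `c₆ z(t₀)²` and
`c₆ β²`, and the lower sandwich bound transfers this to `|z|`. The bound tends to
`√(c₆ / c₅) β`, which gives the ultimate bound on `limsup |z|`.
-/

open Set Filter Topology Real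

theorem mul_le_half_mul_sq_add_sq_div {a b k : ℝ} (hk : 0 < k) :
    a * b ≤ k / 2 * a ^ 2 + b ^ 2 / (2 * k) := by
  have key : k / 2 * a ^ 2 + b ^ 2 / (2 * k) - a * b = (k * a - b) ^ 2 / (2 * k) := by
    field_simp
    ring
  linarith [div_nonneg (sq_nonneg (k * a - b)) (by positivity : (0 : ℝ) ≤ 2 * k)]

theorem le_neg_mul_add_of_dissipation {c k x b w w' : ℝ} (hc : 0 < c) (hk : 0 < k)
    (hw : w ≤ c * x ^ 2) (hw' : w' ≤ -k * x ^ 2 + |x| * b) :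
    w' ≤ -(k / (2 * c)) * w + k / (2 * c) * (c * (b / k) ^ 2) := by
  have hyoung := mul_le_half_mul_sq_add_sq_div (a := |x|) (b := b) hk
  rw [sq_abs] at hyoung
  have hl : k / (2 * c) * w ≤ k / (2 * c) * (c * x ^ 2) := by gcongr
  have hlc : k / (2 * c) * (c * x ^ 2) = k / 2 * x ^ 2 := by field_simp
  have hβ : k / (2 * c) * (c * (b / k) ^ 2) = b ^ 2 / (2 * k) := by field_simp
  linarith

theorem le_gronwallBound_of_deriv_le_on_Ici {f : ℝ → ℝ} {a δ K ε : ℝ}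
    (hf : ∀ t ∈ Ici a, DifferentiableAt ℝ f t) (ha : f a ≤ δ)
    (bound : ∀ t ∈ Ici a, deriv f t ≤ K * f t + ε) :
    ∀ t ∈ Ici a, f t ≤ gronwallBound δ K ε (t - a) := by
  intro t ht
  have hIcc : Icc a t ⊆ Ici a := Icc_subset_Ici_self
  have hIco : Ico a t ⊆ Ici a := Ico_subset_Ici_self
  refine le_gronwallBound_of_liminf_deriv_right_le (f' := deriv f)
    (fun s hs => (hf s (hIcc hs)).continuousAt.continuousWithinAt)
    (fun s hs _ hr => (hf s (hIco hs)).hasDerivAt.hasDerivWithinAt.liminf_right_slope_le hr)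
    ha (fun s hs => bound s (hIco hs)) t ⟨ht, le_rfl⟩

theorem gronwallBound_neg_mul {l : ℝ} (hl : l ≠ 0) (δ B x : ℝ) :
    gronwallBound δ (-l) (l * B) x = δ * exp (-l * x) + B * (1 - exp (-l * x)) := by
  rw [gronwallBound_of_K_ne_0 (neg_ne_zero.mpr hl)]
  field_simp
  ring

theorem abs_le_sqrt_div_mul_of_mul_sq_le {a b x y : ℝ} (ha : 0 < a) (h : a * x ^ 2 ≤ b * y) :
    |x| ≤ √(b / a * y) := by
  rw [← sqrt_sq_eq_abs]
  refine sqrt_le_sqrt ?_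
  rw [div_mul_eq_mul_div, le_div_iff₀ ha]
  linarith

theorem tendsto_exp_interpolation_atTop {l : ℝ} (hl : 0 < l) (a A B : ℝ) :
    Tendsto (fun t => A * exp (-l * (t - a)) + B * (1 - exp (-l * (t - a)))) atTop (𝓝 B) := by
  have hexp : Tendsto (fun t => exp (-l * (t - a))) atTop (𝓝 0) :=
    tendsto_exp_atBot.comp <| (tendsto_atTop_add_const_right _ (-a) tendsto_id).const_mul_atTop_of_neg
      (neg_lt_zero.mpr hl)
  simpa using (hexp.const_mul A).add (((tendsto_const_nhds (x := (1 : ℝ))).sub hexp).const_mul B)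

theorem limsup_le_of_eventually_le_of_tendsto {f g : ℝ → ℝ} {L : ℝ} (hf : 0 ≤ f)
    (hfg : ∀ᶠ t in atTop, f t ≤ g t) (hg : Tendsto g atTop (𝓝 L)) :
    limsup f atTop ≤ L :=
  hg.limsup_eq ▸ limsup_le_limsup hfg (isCoboundedUnder_le_of_le _ hf) hg.isBoundedUnder_le

theorem reduced_order_incomplete_stack_UUB_general
    (t₀ : ℝ) (z : ℝ → ℝ)
    (c₅ c₆ k₄ γ₂ δ Kbar σbar χbar : ℝ) (M : ℕ)
    (hc₅ : 0 < c₅) (hc₅₆ : c₅ ≤ c₆) (hk₄ : 0 < k₄) (hγ₂ : 0 < γ₂) (hδ : 0 ≤ δ)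
    (hδdef : δ = Kbar * σbar * ((M : ℝ) - 1) * χbar)
    (W : ℝ → ℝ)
    (hWdiff : ∀ t ∈ Set.Ici t₀, DifferentiableAt ℝ W t)
    (hWlow : ∀ t ∈ Set.Ici t₀, c₅ * z t ^ 2 ≤ W t)
    (hWhigh : ∀ t ∈ Set.Ici t₀, W t ≤ c₆ * z t ^ 2)
    (hWderiv : ∀ t ∈ Set.Ici t₀, deriv W t ≤ -k₄ * z t ^ 2 + γ₂ * |z t| * δ) :
    (∀ t ∈ Set.Ici t₀,
      |z t| ≤ Real.sqrt ((c₆ / c₅) *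
        (z t₀ ^ 2 * Real.exp (-(k₄ / (2 * c₆)) * (t - t₀))
          + (γ₂ * δ / k₄) ^ 2 * (1 - Real.exp (-(k₄ / (2 * c₆)) * (t - t₀)))))) ∧
    Filter.limsup (fun t => |z t|) Filter.atTop ≤ Real.sqrt (c₆ / c₅) * (γ₂ * δ / k₄) ∧
    Real.sqrt (c₆ / c₅) * (γ₂ * δ / k₄)
      = Real.sqrt (c₆ / c₅) * γ₂ * Kbar * σbar * ((M : ℝ) - 1) * χbar / k₄ := by
  have hc₆ : 0 < c₆ := hc₅.trans_le hc₅₆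
  have hl : 0 < k₄ / (2 * c₆) := by positivity
  have hW := le_gronwallBound_of_deriv_le_on_Ici hWdiff (hWhigh t₀ self_mem_Ici)
    fun t ht => le_neg_mul_add_of_dissipation (b := γ₂ * δ) hc₆ hk₄ (hWhigh t ht)
      ((hWderiv t ht).trans_eq (by ring))
  have hz : ∀ t ∈ Ici t₀, |z t| ≤ √((c₆ / c₅) *
      (z t₀ ^ 2 * exp (-(k₄ / (2 * c₆)) * (t - t₀))
        + (γ₂ * δ / k₄) ^ 2 * (1 - exp (-(k₄ / (2 * c₆)) * (t - t₀))))) := by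
    intro t ht
    refine abs_le_sqrt_div_mul_of_mul_sq_le hc₅ ((hWlow t ht).trans ((hW t ht).trans_eq ?_))
    rw [gronwallBound_neg_mul hl.ne']
    ring
  have hlim := ((tendsto_exp_interpolation_atTop hl t₀ (z t₀ ^ 2) ((γ₂ * δ / k₄) ^ 2)).const_mul
    (c₆ / c₅)).sqrt
  rw [sqrt_mul (by positivity), sqrt_sq (by positivity)] at hlim
  refine ⟨hz, limsup_le_of_eventually_le_of_tendsto (fun t => abs_nonneg (z t))
    ((eventually_ge_atTop t₀).mono hz) hlim, ?_⟩
  subst hδdef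
  ring

/-- Theorem 3: UUB of the reduced-order concurrent-learning observer depth error when
the history stack is incomplete and persistence of excitation holds (encoded through the
existence of the Lyapunov function `W` with quadratic sandwich bounds and the stated
dissipation inequality along the error trajectory). -/
theorem reduced_order_incomplete_stack_UUB
    (t₀ : ℝ) (z : ℝ → ℝ) (hz : ContinuousOn z (Set.Ici t₀))
    (c₅ c₆ k₄ γ₂ δ Kbar σbar χbar : ℝ) (M : ℕ) (hM : 1 ≤ M)
    (hc₅ : 0 < c₅) (hc₅₆ : c₅ ≤ c₆) (hk₄ : 0 < k₄) (hγ₂ : 0 < γ₂) (hδ : 0 ≤ δ)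
    (hKbar : 0 ≤ Kbar) (hσbar : 0 ≤ σbar) (hχbar : 0 ≤ χbar)
    (hδdef : δ = Kbar * σbar * ((M : ℝ) - 1) * χbar)
    (W : ℝ → ℝ)
    (hWdiff : ∀ t ∈ Set.Ici t₀, DifferentiableAt ℝ W t)
    (hWlow : ∀ t ∈ Set.Ici t₀, c₅ * z t ^ 2 ≤ W t)
    (hWhigh : ∀ t ∈ Set.Ici t₀, W t ≤ c₆ * z t ^ 2)
    (hWderiv : ∀ t ∈ Set.Ici t₀, deriv W t ≤ -k₄ * z t ^ 2 + γ₂ * |z t| * δ) :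
    (∀ t ∈ Set.Ici t₀,
      |z t| ≤ Real.sqrt ((c₆ / c₅) *
        (z t₀ ^ 2 * Real.exp (-(k₄ / (2 * c₆)) * (t - t₀))
          + (γ₂ * δ / k₄) ^ 2 * (1 - Real.exp (-(k₄ / (2 * c₆)) * (t - t₀)))))) ∧
    Filter.limsup (fun t => |z t|) Filter.atTop ≤ Real.sqrt (c₆ / c₅) * (γ₂ * δ / k₄) ∧
    Real.sqrt (c₆ / c₅) * (γ₂ * δ / k₄)
      = Real.sqrt (c₆ / c₅) * γ₂ * Kbar * σbar * ((M : ℝ) - 1) * χbar / k₄ :=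
  reduced_order_incomplete_stack_UUB_general t₀ z c₅ c₆ k₄ γ₂ δ Kbar σbar χbar M hc₅ hc₅₆ hk₄ hγ₂ hδ
    hδdef W hWdiff hWlow hWhigh hWderiv
end

section
/- Let t₀ ∈ ℝ, let z : ℝ → ℝ be differentiable on [t₀, ∞), let g, Δ : ℝ → ℝ, and let σ₁ > 0, S ≥ σ₁, L_g ≥ 0, δ ≥ 0, K̄ > L_g/σ₁. Suppose for all t ≥ t₀: z'(t) = −K̄·(S·z(t) + Δ(t)) + g(t); |g(t)| ≤ L_g·|z(t)|; |Δ(t)| ≤ δ. Then the function V(t) = (1/2)·z(t)² satisfies, for all t ≥ t₀, V'(t) ≤ −(k₅/2)·z(t)² + (K̄·δ)²/(2·k₅) = −k₅·V(t) + (K̄·δ)²/(2·k₅), where k₅ = K̄·σ₁ − L_g. -/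
/-! Along the error dynamics `V' = z ż`, where the gain term contributes at most `-K̄σ₁z²` because
`S ≥ σ₁`, the depth mismatch at most `L_g z²`, and the disturbance at most `K̄δ|z|`; Young's
inequality with weight `k₅ = K̄σ₁ - L_g > 0` trades half of the remaining `-k₅z²` for the
constant `(K̄δ)²/(2k₅)`. -/

lemma mul_le_half_mul_sq_add_sq_div_two_mul {k : ℝ} (hk : 0 < k) (a b : ℝ) :
    a * b ≤ k / 2 * b ^ 2 + a ^ 2 / (2 * k) := by
  have hscaled : 2 * k * (k / 2 * b ^ 2 + a ^ 2 / (2 * k)) = k ^ 2 * b ^ 2 + a ^ 2 := by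
    field_simp
  have hscaled_le : 2 * k * (a * b) ≤ 2 * k * (k / 2 * b ^ 2 + a ^ 2 / (2 * k)) := by
    nlinarith [sq_nonneg (a - k * b)]
  exact le_of_mul_le_mul_left hscaled_le (by positivity)

lemma HasDerivAt.half_sq {f : ℝ → ℝ} {f' t : ℝ} (hf : HasDerivAt f f' t) :
    HasDerivAt (fun s => 1 / 2 * f s ^ 2) (f t * f') t := by
  refine ((hf.pow 2).const_mul (1 / 2 : ℝ)).congr_deriv ?_
  ring

lemma error_energy_rate_le {z g Δ σ₁ S Lg δ K : ℝ} (hK : 0 ≤ K) (hS : σ₁ ≤ S)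
    (hg : |g| ≤ Lg * |z|) (hΔ : |Δ| ≤ δ) :
    z * (-K * (S * z + Δ) + g) ≤ -(K * σ₁ - Lg) * z ^ 2 + K * δ * |z| := by
  have hcoupling : z * g ≤ Lg * z ^ 2 :=
    calc z * g ≤ |z| * |g| := (le_abs_self _).trans (abs_mul z g).le
      _ ≤ |z| * (Lg * |z|) := by gcongr
      _ = Lg * z ^ 2 := by rw [← sq_abs z]; ring
  have hdisturbance : -(K * (z * Δ)) ≤ K * δ * |z| :=
    calc -(K * (z * Δ)) = K * -(z * Δ) := by ring
      _ ≤ K * (|z| * |Δ|) := by rw [← abs_mul]; gcongr; exact neg_le_abs _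
      _ ≤ K * (|z| * δ) := by gcongr
      _ = K * δ * |z| := by ring
  have hexcitation : K * σ₁ * z ^ 2 ≤ K * S * z ^ 2 := by gcongr
  nlinarith

lemma error_energy_rate_le_of_pos_margin {z g Δ σ₁ S Lg δ K : ℝ} (hK : 0 ≤ K) (hS : σ₁ ≤ S)
    (hk : 0 < K * σ₁ - Lg) (hg : |g| ≤ Lg * |z|) (hΔ : |Δ| ≤ δ) :
    z * (-K * (S * z + Δ) + g) ≤
      -((K * σ₁ - Lg) / 2) * z ^ 2 + (K * δ) ^ 2 / (2 * (K * σ₁ - Lg)) := by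
  have hyoung := mul_le_half_mul_sq_add_sq_div_two_mul hk (K * δ) |z|
  rw [sq_abs] at hyoung
  linarith [error_energy_rate_le hK hS hg hΔ]

theorem reduced_order_complete_stack_lyapunov_inequality_general
    (t₀ : ℝ) (z : ℝ → ℝ) (g Δ : ℝ → ℝ)
    (σ₁ S Lg δ Kbar : ℝ)
    (hσ₁ : 0 < σ₁) (hS : σ₁ ≤ S) (hLg : 0 ≤ Lg)
    (hgain : Lg / σ₁ < Kbar)
    (hz : ∀ t ∈ Set.Ici t₀, HasDerivAt z (-Kbar * (S * z t + Δ t) + g t) t)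
    (hg : ∀ t ∈ Set.Ici t₀, |g t| ≤ Lg * |z t|)
    (hΔ : ∀ t ∈ Set.Ici t₀, |Δ t| ≤ δ)
    (k₅ : ℝ) (hk₅ : k₅ = Kbar * σ₁ - Lg)
    (V : ℝ → ℝ) (hV : ∀ t, V t = (1 / 2) * z t ^ 2) :
    ∀ t ∈ Set.Ici t₀,
      deriv V t ≤ -(k₅ / 2) * z t ^ 2 + (Kbar * δ) ^ 2 / (2 * k₅) ∧
      -(k₅ / 2) * z t ^ 2 + (Kbar * δ) ^ 2 / (2 * k₅)
        = -k₅ * V t + (Kbar * δ) ^ 2 / (2 * k₅) := by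
  intro t ht
  have hK : 0 ≤ Kbar := (div_nonneg hLg hσ₁.le).trans hgain.le
  have hk : 0 < Kbar * σ₁ - Lg := sub_pos.mpr ((div_lt_iff₀ hσ₁).mp hgain)
  have hVderiv : deriv V t = z t * (-Kbar * (S * z t + Δ t) + g t) := by
    rw [funext hV]
    exact (hz t ht).half_sq.deriv
  subst hk₅
  refine ⟨?_, by rw [hV]; ring⟩
  rw [hVderiv]
  exact error_energy_rate_le_of_pos_margin hK hS hk (hg t ht) (hΔ t ht)

/-- Lyapunov derivative inequality for the reduced-order concurrent-learning observer
error dynamics when the history stack is complete: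
`V'(t) ≤ −(k₅/2)z² + (K̄δ)²/(2k₅) = −k₅V + (K̄δ)²/(2k₅)` for `V = z²/2`. -/
theorem reduced_order_complete_stack_lyapunov_inequality
    (t₀ : ℝ) (z : ℝ → ℝ) (g Δ : ℝ → ℝ)
    (σ₁ S Lg δ Kbar : ℝ)
    (hσ₁ : 0 < σ₁) (hS : σ₁ ≤ S) (hLg : 0 ≤ Lg) (hδ : 0 ≤ δ)
    (hgain : Lg / σ₁ < Kbar)
    (hz : ∀ t ∈ Set.Ici t₀, HasDerivAt z (-Kbar * (S * z t + Δ t) + g t) t)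
    (hg : ∀ t ∈ Set.Ici t₀, |g t| ≤ Lg * |z t|)
    (hΔ : ∀ t ∈ Set.Ici t₀, |Δ t| ≤ δ)
    (k₅ : ℝ) (hk₅ : k₅ = Kbar * σ₁ - Lg)
    (V : ℝ → ℝ) (hV : ∀ t, V t = (1 / 2) * z t ^ 2) :
    ∀ t ∈ Set.Ici t₀,
      deriv V t ≤ -(k₅ / 2) * z t ^ 2 + (Kbar * δ) ^ 2 / (2 * k₅) ∧
      -(k₅ / 2) * z t ^ 2 + (Kbar * δ) ^ 2 / (2 * k₅)
        = -k₅ * V t + (Kbar * δ) ^ 2 / (2 * k₅) :=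
  reduced_order_complete_stack_lyapunov_inequality_general t₀ z g Δ σ₁ S Lg δ Kbar hσ₁ hS hLg hgain
    hz hg hΔ k₅ hk₅ V hV
end
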